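/- Let a(t), b(t) ∈ C[t] be polynomials and let f ∈ C[[t]] satisfy the τ-difference equation f = a(t)·f^{(1)} + b(t)·f^{(2)} as formal power series. If the radius of convergence of f is strictly greater than 1, then the radius of convergence of f is infinite. -/

import Mathlib

open scoped NNReal ENNReal

/-- The radius of convergence of a power series `∑ f i * t ^ i` with coefficients in a
normed field: the supremum of all `r ≥ 0` such that the series converges at every point
of norm `< r`. -/
noncomputable def radiusOfConv {C : Type*} [NormedField C] (f : ℕ → C) : ℝ≥0∞ :=
  ⨆ (r : ℝ≥0) (_ : ∀ t₀ : C, ‖t₀‖ < (r : ℝ) → Summable fun i => f i * t₀ ^ i), (r : ℝ≥0∞)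

/-- The `k`-th Anderson twist of a formal power series: `f^{(k)} = ∑ f_i^{q^k} t^i`. -/
noncomputable def andersonTwist {C : Type*} [Field C] (q k : ℕ) (f : PowerSeries C) :
    PowerSeries C :=
  PowerSeries.mk fun i => (PowerSeries.coeff (R := C) i) f ^ q ^ k

/-!
Let `R` be the radius of convergence of `f`. In a complete ultrametric field a series converges
as soon as its terms tend to zero, so raising the coefficients to the `m`-th power turns
convergence at `s` into convergence at `s ^ m`; as every point of `C` is an `m`-th power, the
radius of `f^{(k)}` is at least `R ^ q ^ k`. Multiplying by a polynomial and adding do not shrink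
the radius, so the τ-difference equation gives `R ≥ min (R ^ q) (R ^ q ^ 2) = R ^ q`, which is
impossible for a finite `R > 1` because `q ≥ 2`.
-/

open Filter PowerSeries

section PolynomialMul

variable {R : Type*} [CommRing R] [TopologicalSpace R] [IsTopologicalRing R]
  {g : PowerSeries R} {t : R}

theorem PowerSeries.summable_coeff_X_pow_mul_mul_pow
    (hg : Summable fun n => coeff n g * t ^ n) (i : ℕ) :
    Summable fun n => coeff n (X ^ i * g) * t ^ n := by
  rw [← summable_nat_add_iff i]
  refine (hg.mul_left (t ^ i)).congr fun n => ?_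
  rw [coeff_X_pow_mul, pow_add]
  ring

theorem PowerSeries.summable_coeff_polynomial_mul_mul_pow
    (hg : Summable fun n => coeff n g * t ^ n) (a : Polynomial R) :
    Summable fun n => coeff n ((a : PowerSeries R) * g) * t ^ n := by
  induction a using Polynomial.induction_on' with
  | add a b ha hb =>
    simpa only [Polynomial.coe_add, add_mul, map_add] using ha.add hb
  | monomial i c =>
    simp_rw [← Polynomial.C_mul_X_pow_eq_monomial, Polynomial.coe_mul, Polynomial.coe_C,
      Polynomial.coe_pow, Polynomial.coe_X, mul_assoc, coeff_C_mul, mul_assoc]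
    exact (summable_coeff_X_pow_mul_mul_pow hg i).mul_left c

end PolynomialMul

section RadiusOfConv

variable {C : Type*} [NormedField C] {f g : ℕ → C}

theorem summable_of_nnnorm_lt_radiusOfConv {t : C} (ht : (‖t‖₊ : ℝ≥0∞) < radiusOfConv f) :
    Summable fun i => f i * t ^ i := by
  simp only [radiusOfConv, lt_iSup_iff] at ht
  obtain ⟨r, hr, htr⟩ := ht
  exact hr t (by exact_mod_cast htr)

theorem le_radiusOfConv {R : ℝ≥0∞}
    (h : ∀ t : C, (‖t‖₊ : ℝ≥0∞) < R → Summable fun i => f i * t ^ i) : R ≤ radiusOfConv f := by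
  refine ENNReal.le_of_forall_nnreal_lt fun r hr => le_iSup₂_of_le r (fun t ht => h t ?_) le_rfl
  exact lt_trans (by exact_mod_cast ht) hr

theorem min_radiusOfConv_le_radiusOfConv_add :
    min (radiusOfConv f) (radiusOfConv g) ≤ radiusOfConv (f + g) :=
  le_radiusOfConv fun t ht => by
    simpa only [Pi.add_apply, add_mul] using
      (summable_of_nnnorm_lt_radiusOfConv (lt_min_iff.mp ht).1).add
        (summable_of_nnnorm_lt_radiusOfConv (lt_min_iff.mp ht).2)

theorem radiusOfConv_le_radiusOfConv_polynomial_mul (a : Polynomial C) :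
    radiusOfConv f ≤ radiusOfConv fun n => coeff n ((a : PowerSeries C) * mk f) :=
  le_radiusOfConv fun t ht => summable_coeff_polynomial_mul_mul_pow
    (by simpa only [coeff_mk] using summable_of_nnnorm_lt_radiusOfConv ht) a

theorem radiusOfConv_pow_le_radiusOfConv_pow [CompleteSpace C] [IsAlgClosed C]
    [IsUltrametricDist C] {m : ℕ} (hm : m ≠ 0) :
    radiusOfConv f ^ m ≤ radiusOfConv fun i => f i ^ m := by
  refine le_radiusOfConv fun t ht => ?_
  obtain ⟨s, rfl⟩ := IsAlgClosed.exists_pow_nat_eq t (Nat.pos_of_ne_zero hm)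
  have hs : (‖s‖₊ : ℝ≥0∞) < radiusOfConv f := by
    rwa [nnnorm_pow, ENNReal.coe_pow, ENNReal.pow_lt_pow_left_iff hm] at ht
  refine NonarchimedeanAddGroup.summable_of_tendsto_cofinite_zero ?_
  rw [Nat.cofinite_eq_atTop]
  have := ((summable_of_nnnorm_lt_radiusOfConv hs).tendsto_atTop_zero).pow m
  rw [zero_pow hm] at this
  refine this.congr fun i => ?_
  rw [mul_pow, ← pow_mul, ← pow_mul, mul_comm i m]

end RadiusOfConv

theorem ENNReal.eq_top_of_pow_le_self {R : ℝ≥0∞} {n : ℕ} (hn : 1 < n) (hR : 1 < R)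
    (h : R ^ n ≤ R) : R = ⊤ := by
  by_contra hR_top
  lift R to ℝ≥0 using hR_top
  norm_cast at hR h
  have := (pow_le_pow_iff_right₀ hR).mp (h.trans_eq (pow_one R).symm)
  omega

theorem andersonTwist_mk {C : Type*} [Field C] (q k : ℕ) (f : ℕ → C) :
    andersonTwist q k (mk f) = mk fun i => f i ^ q ^ k := by
  simp [andersonTwist]

theorem radius_infinite_of_tau_difference_general
    {C : Type*} [NormedField C] [CompleteSpace C] [IsAlgClosed C] [IsUltrametricDist C]
    (p e : ℕ) (hp : p.Prime) (he : 0 < e)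
    (q : ℕ) (hq : q = p ^ e)
    (f : ℕ → C) (a b : Polynomial C)
    (heq : PowerSeries.mk f
      = (a : PowerSeries C) * andersonTwist q 1 (PowerSeries.mk f)
        + (b : PowerSeries C) * andersonTwist q 2 (PowerSeries.mk f))
    (hrad : 1 < radiusOfConv f) :
    radiusOfConv f = ⊤ := by
  have hq1 : 1 < q := hq ▸ Nat.one_lt_pow he.ne' hp.one_lt
  have hf : f = (fun n => coeff n ((a : PowerSeries C) * mk fun i => f i ^ q)) +
      fun n => coeff n ((b : PowerSeries C) * mk fun i => f i ^ q ^ 2) := by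
    funext n
    simpa [andersonTwist_mk] using congrArg (coeff n) heq
  refine ENNReal.eq_top_of_pow_le_self hq1 hrad ?_
  calc radiusOfConv f ^ q ≤ min (radiusOfConv f ^ q) (radiusOfConv f ^ q ^ 2) :=
        le_min le_rfl (pow_le_pow_right₀ hrad.le (Nat.le_self_pow two_ne_zero q))
    _ ≤ min (radiusOfConv fun n => coeff n ((a : PowerSeries C) * mk fun i => f i ^ q))
          (radiusOfConv fun n => coeff n ((b : PowerSeries C) * mk fun i => f i ^ q ^ 2)) :=
        min_le_min
          ((radiusOfConv_pow_le_radiusOfConv_pow (by omega)).trans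
            (radiusOfConv_le_radiusOfConv_polynomial_mul a))
          ((radiusOfConv_pow_le_radiusOfConv_pow (pow_ne_zero 2 (by omega))).trans
            (radiusOfConv_le_radiusOfConv_polynomial_mul b))
    _ ≤ radiusOfConv f :=
        min_radiusOfConv_le_radiusOfConv_add.trans_eq (congrArg radiusOfConv hf.symm)

/-- If `f ∈ C[[t]]` satisfies a τ-difference equation `f = a(t) f^{(1)} + b(t) f^{(2)}`
with polynomial coefficients and has radius of convergence `> 1`, then its radius of
convergence is infinite. -/
theorem radius_infinite_of_tau_difference
    {C : Type*} [NormedField C] [CompleteSpace C] [IsAlgClosed C] [IsUltrametricDist C]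
    (p e : ℕ) (hp : p.Prime) (he : 0 < e) [CharP C p]
    (q : ℕ) (hq : q = p ^ e)
    (f : ℕ → C) (a b : Polynomial C)
    (heq : PowerSeries.mk f
      = (a : PowerSeries C) * andersonTwist q 1 (PowerSeries.mk f)
        + (b : PowerSeries C) * andersonTwist q 2 (PowerSeries.mk f))
    (hrad : 1 < radiusOfConv f) :
    radiusOfConv f = ⊤ :=
  radius_infinite_of_tau_difference_general p e hp he q hq f a b heq hrad
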